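/- arXiv:2103.05128 — 7 statements merged into one kernel-verified Lean document; each statement's English description precedes it below -/
import Mathlib

section
/- Suppose ζ_j ≠ λ_i for all i, j, and that B(ζ_j) and S(ζ_j) are invertible for j = 1,…,N. Then −Σ_{j=1}^{N} ω_j B(ζ_j)^{-1} F(ζ_j) S(ζ_j)^{-1} = Σ_{i=1}^{n} ρ(λ_i) u^{(i)} (ŷ^{(i)})^H, where ρ(ζ) = Σ_{j=1}^{N} ω_j/(ζ − ζ_j). -/
open Matrix BigOperators

lemma aux_mul_vecMulVec {m n p : Type*} [Fintype n] (Nn : Matrix m n ℂ) (v : n → ℂ) (w : p → ℂ) :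
    Nn * Matrix.vecMulVec v w = Matrix.vecMulVec (Nn *ᵥ v) w := by
  ext a b
  simp [Matrix.mul_apply, Matrix.vecMulVec_apply, Matrix.mulVec, dotProduct,
    Finset.sum_mul, mul_assoc]

lemma aux_smul_vecMulVec {m p : Type*} (c : ℂ) (v : m → ℂ) (w : p → ℂ) :
    Matrix.vecMulVec (c • v) w = c • Matrix.vecMulVec v w := by
  ext a b
  simp [Matrix.vecMulVec_apply, mul_assoc]

/-- Equating the (1,2) blocks of the two representations of
`ρ(M⁻¹A)`: `-∑ j, ω j B(ζⱼ)⁻¹ F(ζⱼ) S(ζⱼ)⁻¹ = ∑ i, ρ(λ i) u⁽ⁱ⁾ (ŷ⁽ⁱ⁾)ᴴ`. -/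
theorem stmt_5 {d s N : ℕ}
    (B MB : Matrix (Fin d) (Fin d) ℂ) (F MF : Matrix (Fin d) (Fin s) ℂ)
    (E ME : Matrix (Fin s) (Fin d) ℂ) (C MC : Matrix (Fin s) (Fin s) ℂ)
    (A M X Xh : Matrix (Fin d ⊕ Fin s) (Fin d ⊕ Fin s) ℂ)
    (lam : Fin d ⊕ Fin s → ℂ)
    (hA : A = Matrix.fromBlocks B F E C)
    (hMm : M = Matrix.fromBlocks MB MF ME MC)
    (hM : IsUnit M)
    (hbi : Xhᴴ * M * X = 1)
    (hright : ∀ i, A *ᵥ (fun r => X r i) = lam i • (M *ᵥ (fun r => X r i)))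
    (hleft : ∀ i, (fun r => star (Xh r i)) ᵥ* A = lam i • ((fun r => star (Xh r i)) ᵥ* M))
    (ζp : Fin N → ℂ) (ω : Fin N → ℂ)
    (hdist : Function.Injective ζp)
    (hζ : ∀ i j, ζp j ≠ lam i)
    (hBinv : ∀ j, IsUnit (B - ζp j • MB))
    (hSinv : ∀ j, IsUnit ((C - ζp j • MC) -
      (E - ζp j • ME) * (B - ζp j • MB)⁻¹ * (F - ζp j • MF))) :
    -(∑ j, ω j • ((B - ζp j • MB)⁻¹ * (F - ζp j • MF) *
        ((C - ζp j • MC) - (E - ζp j • ME) * (B - ζp j • MB)⁻¹ * (F - ζp j • MF))⁻¹)) =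
      ∑ i, (∑ j, ω j / (lam i - ζp j)) •
        Matrix.vecMulVec (fun a => X (Sum.inl a) i) (fun b => star (Xh (Sum.inr b) i)) := by
  classical
  set R : (Fin d ⊕ Fin s) → Matrix (Fin d ⊕ Fin s) (Fin d ⊕ Fin s) ℂ :=
    fun i => Matrix.vecMulVec (fun r => X r i) (fun c => star (Xh c i)) with hR
  -- biorthogonality consequences
  have hX1 : X * (Xhᴴ * M) = 1 := by
    rw [mul_eq_one_comm]; exact hbi
  have hMXXh : M * (X * Xhᴴ) = 1 := by
    rw [mul_eq_one_comm, Matrix.mul_assoc]; exact hX1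
  have hsumR : ∑ i, R i = X * Xhᴴ := by
    ext a b
    simp [hR, Matrix.sum_apply, Matrix.vecMulVec_apply, Matrix.mul_apply,
      Matrix.conjTranspose_apply, mul_comm]
  -- resolvent expansion of the pencil
  have hpencil : ∀ j, (A - ζp j • M)⁻¹ = ∑ i, (lam i - ζp j)⁻¹ • R i := by
    intro j
    apply Matrix.inv_eq_right_inv
    rw [Matrix.mul_sum]
    have hterm : ∀ i, (A - ζp j • M) * ((lam i - ζp j)⁻¹ • R i) = M * R i := by
      intro i
      have hv : (A - ζp j • M) *ᵥ (fun r => X r i)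
          = (lam i - ζp j) • (M *ᵥ (fun r => X r i)) := by
        rw [Matrix.sub_mulVec, Matrix.smul_mulVec, hright i, sub_smul]
      rw [Matrix.mul_smul, hR, aux_mul_vecMulVec, hv, aux_smul_vecMulVec, smul_smul,
        inv_mul_cancel₀ (sub_ne_zero.mpr (Ne.symm (hζ i j))), one_smul,
        aux_mul_vecMulVec]
    calc ∑ i, (A - ζp j • M) * ((lam i - ζp j)⁻¹ • R i)
        = ∑ i, M * R i := by exact Finset.sum_congr rfl fun i _ => hterm i
      _ = M * ∑ i, R i := (Matrix.mul_sum _ _ _).symm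
      _ = 1 := by rw [hsumR, hMXXh]
  -- block structure of the pencil and its inverse
  have hmain : ∀ j, (B - ζp j • MB)⁻¹ * (F - ζp j • MF) *
      ((C - ζp j • MC) - (E - ζp j • ME) * (B - ζp j • MB)⁻¹ * (F - ζp j • MF))⁻¹
      = -((∑ i, (lam i - ζp j)⁻¹ • R i).toBlocks₁₂) := by
    intro j
    have hblock : A - ζp j • M = Matrix.fromBlocks (B - ζp j • MB) (F - ζp j • MF)
        (E - ζp j • ME) (C - ζp j • MC) := by
      rw [hA, hMm]
      ext (a | a) (b | b) <;> simp [Matrix.sub_apply]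
    letI iB : Invertible (B - ζp j • MB) := (hBinv j).invertible
    have hB : ⅟ (B - ζp j • MB) = (B - ζp j • MB)⁻¹ := invOf_eq_nonsing_inv _
    letI iS : Invertible ((C - ζp j • MC) -
        (E - ζp j • ME) * ⅟ (B - ζp j • MB) * (F - ζp j • MF)) := by
      rw [hB]; exact (hSinv j).invertible
    letI iF : Invertible (Matrix.fromBlocks (B - ζp j • MB) (F - ζp j • MF)
        (E - ζp j • ME) (C - ζp j • MC)) :=
      @Matrix.fromBlocks₁₁Invertible _ _ _ _ _ _ _ _ _ _ _ _ iB iS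
    have hS : ⅟ ((C - ζp j • MC) - (E - ζp j • ME) * ⅟ (B - ζp j • MB) * (F - ζp j • MF))
        = ((C - ζp j • MC) - (E - ζp j • ME) * (B - ζp j • MB)⁻¹ * (F - ζp j • MF))⁻¹ := by
      rw [invOf_eq_nonsing_inv]; congr 2; rw [hB]
    have h3 := @Matrix.invOf_fromBlocks₁₁_eq _ _ _ _ _ _ _ _
      (B - ζp j • MB) (F - ζp j • MF) (E - ζp j • ME) (C - ζp j • MC) iB iS iF
    have key : ((A - ζp j • M)⁻¹).toBlocks₁₂
        = -((B - ζp j • MB)⁻¹ * (F - ζp j • MF) *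
          ((C - ζp j • MC) - (E - ζp j • ME) * (B - ζp j • MB)⁻¹ * (F - ζp j • MF))⁻¹) := by
      rw [hblock, ← invOf_eq_nonsing_inv, h3]
      simp only [Matrix.toBlocks_fromBlocks₁₂]
      rw [hS, hB]
    have := key.symm
    rw [hpencil j] at this
    rw [← neg_eq_iff_eq_neg.mpr this.symm]
  -- assemble
  have hRtb : ∀ i, (R i).toBlocks₁₂ =
      Matrix.vecMulVec (fun a => X (Sum.inl a) i) (fun b => star (Xh (Sum.inr b) i)) := by
    intro i; ext a b; simp [hR, Matrix.toBlocks₁₂, Matrix.vecMulVec_apply]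
  calc -(∑ j, ω j • ((B - ζp j • MB)⁻¹ * (F - ζp j • MF) *
        ((C - ζp j • MC) - (E - ζp j • ME) * (B - ζp j • MB)⁻¹ * (F - ζp j • MF))⁻¹))
      = ∑ j, ∑ i, (ω j * (lam i - ζp j)⁻¹) • (R i).toBlocks₁₂ := by
        rw [← Finset.sum_neg_distrib]
        refine Finset.sum_congr rfl fun j _ => ?_
        rw [hmain j, smul_neg, neg_neg]
        have htb : (∑ i, (lam i - ζp j)⁻¹ • R i).toBlocks₁₂
            = ∑ i, (lam i - ζp j)⁻¹ • (R i).toBlocks₁₂ := by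
          ext a b
          simp [Matrix.toBlocks₁₂, Matrix.sum_apply]
        rw [htb, Finset.smul_sum]
        refine Finset.sum_congr rfl fun i _ => ?_
        rw [← smul_smul]
    _ = ∑ i, ∑ j, (ω j * (lam i - ζp j)⁻¹) • (R i).toBlocks₁₂ := Finset.sum_comm
    _ = ∑ i, (∑ j, ω j / (lam i - ζp j)) •
        Matrix.vecMulVec (fun a => X (Sum.inl a) i) (fun b => star (Xh (Sum.inr b) i)) := by
        refine Finset.sum_congr rfl fun i _ => ?_
        rw [← hRtb i, ← Finset.sum_smul]
        simp [div_eq_mul_inv]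
end

section
/- Suppose ζ_j ≠ λ_i for all i, j, and that B(ζ_j) and S(ζ_j) are invertible for j = 1,…,N. Then Σ_{j=1}^{N} ω_j S(ζ_j)^{-1} = Σ_{i=1}^{n} ρ(λ_i) y^{(i)} (ŷ^{(i)})^H, where ρ(ζ) = Σ_{j=1}^{N} ω_j/(ζ − ζ_j). -/
open Matrix BigOperators

theorem schur_block_inv {d s : ℕ} (Bz : Matrix (Fin d) (Fin d) ℂ) (Fz : Matrix (Fin d) (Fin s) ℂ)
    (Ez : Matrix (Fin s) (Fin d) ℂ) (Cz : Matrix (Fin s) (Fin s) ℂ)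
    (hB : IsUnit Bz) (hS : IsUnit (Cz - Ez * Bz⁻¹ * Fz)) :
    ((Matrix.fromBlocks Bz Fz Ez Cz)⁻¹).toBlocks₂₂ = (Cz - Ez * Bz⁻¹ * Fz)⁻¹ := by
  set S := Cz - Ez * Bz⁻¹ * Fz with hSdef
  have hBd : IsUnit Bz.det := (Matrix.isUnit_iff_isUnit_det _).mp hB
  have hSd : IsUnit S.det := (Matrix.isUnit_iff_isUnit_det _).mp hS
  have hBB : Bz * Bz⁻¹ = 1 := Matrix.mul_nonsing_inv _ hBd
  have hSS : S * S⁻¹ = 1 := Matrix.mul_nonsing_inv _ hSd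
  have key : Cz * S⁻¹ = 1 + Ez * Bz⁻¹ * Fz * S⁻¹ := by
    have : (Cz - Ez * Bz⁻¹ * Fz) * S⁻¹ = 1 := by rw [← hSdef]; exact hSS
    rw [Matrix.sub_mul] at this
    linear_combination (norm := abel) this
  have hinv : (Matrix.fromBlocks Bz Fz Ez Cz)⁻¹ =
      Matrix.fromBlocks (Bz⁻¹ + Bz⁻¹ * Fz * S⁻¹ * Ez * Bz⁻¹) (-(Bz⁻¹ * Fz * S⁻¹))
        (-(S⁻¹ * Ez * Bz⁻¹)) S⁻¹ := by
    apply Matrix.inv_eq_right_inv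
    rw [Matrix.fromBlocks_multiply]
    have h11 : Bz * (Bz⁻¹ + Bz⁻¹ * Fz * S⁻¹ * Ez * Bz⁻¹) + Fz * -(S⁻¹ * Ez * Bz⁻¹) = 1 := by
      simp only [Matrix.mul_add, Matrix.mul_neg, ← Matrix.mul_assoc, hBB, Matrix.one_mul]
      abel
    have h12 : Bz * -(Bz⁻¹ * Fz * S⁻¹) + Fz * S⁻¹ = 0 := by
      simp only [Matrix.mul_neg, ← Matrix.mul_assoc, hBB, Matrix.one_mul]
      abel
    have h21 : Ez * (Bz⁻¹ + Bz⁻¹ * Fz * S⁻¹ * Ez * Bz⁻¹) + Cz * -(S⁻¹ * Ez * Bz⁻¹) = 0 := by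
      simp only [Matrix.mul_add, Matrix.mul_neg, ← Matrix.mul_assoc, key, Matrix.add_mul,
        Matrix.one_mul]
      abel
    have h22 : Ez * -(Bz⁻¹ * Fz * S⁻¹) + Cz * S⁻¹ = 1 := by
      simp only [Matrix.mul_neg, ← Matrix.mul_assoc, key]
      abel
    rw [h11, h12, h21, h22, Matrix.fromBlocks_one]
  rw [hinv, Matrix.toBlocks_fromBlocks₂₂]

theorem resolvent_decomp {n : Type*} [Fintype n] [DecidableEq n]
    (A M X Xh : Matrix n n ℂ) (lam : n → ℂ)
    (hbi : Xhᴴ * M * X = 1)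
    (hright : ∀ i, A *ᵥ (fun r => X r i) = lam i • (M *ᵥ (fun r => X r i)))
    (ζ : ℂ) (hζ : ∀ i, ζ ≠ lam i) :
    (A - ζ • M)⁻¹ = X * Matrix.diagonal (fun i => (lam i - ζ)⁻¹) * Xhᴴ := by
  have hXX : (Xhᴴ * M) * X = 1 := by rw [Matrix.mul_assoc] at hbi ⊢; exact hbi
  have hXX' : X * (Xhᴴ * M) = 1 := mul_eq_one_comm.mp hXX
  have hAX : A * X = M * X * Matrix.diagonal lam := by
    ext a i
    have h := congrFun (hright i) a
    simp only [Matrix.mulVec, dotProduct, Pi.smul_apply, smul_eq_mul] at h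
    rw [Matrix.mul_diagonal]
    simp only [Matrix.mul_apply]
    rw [h]; ring
  have hAfac : A - ζ • M = M * X * Matrix.diagonal (fun i => lam i - ζ) * (Xhᴴ * M) := by
    have hdd : Matrix.diagonal (fun i => lam i - ζ) =
        Matrix.diagonal lam - ζ • (1 : Matrix n n ℂ) := by
      ext a b
      by_cases hab : a = b <;>
        simp [Matrix.diagonal, Matrix.one_apply, hab]
    rw [hdd, Matrix.mul_sub, Matrix.sub_mul, Matrix.mul_smul, Matrix.mul_one,
      Matrix.smul_mul, ← hAX, Matrix.mul_assoc A X (Xhᴴ * M), hXX', Matrix.mul_one,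
      Matrix.mul_assoc M X (Xhᴴ * M), hXX', Matrix.mul_one]
  apply Matrix.inv_eq_left_inv
  rw [hAfac]
  have hdiag : Matrix.diagonal (fun i => (lam i - ζ)⁻¹) *
      Matrix.diagonal (fun i => lam i - ζ) = 1 := by
    rw [Matrix.diagonal_mul_diagonal]
    have : ∀ i, (lam i - ζ)⁻¹ * (lam i - ζ) = 1 := fun i =>
      inv_mul_cancel₀ (sub_ne_zero_of_ne (Ne.symm (hζ i)))
    simp only [this]
    exact Matrix.diagonal_one
  calc X * Matrix.diagonal (fun i => (lam i - ζ)⁻¹) * Xhᴴ *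
        (M * X * Matrix.diagonal (fun i => lam i - ζ) * (Xhᴴ * M))
      = X * Matrix.diagonal (fun i => (lam i - ζ)⁻¹) * (Xhᴴ * M * X) *
          Matrix.diagonal (fun i => lam i - ζ) * (Xhᴴ * M) := by
        simp only [Matrix.mul_assoc]
    _ = X * (Matrix.diagonal (fun i => (lam i - ζ)⁻¹) *
          Matrix.diagonal (fun i => lam i - ζ)) * (Xhᴴ * M) := by
        rw [hbi, Matrix.mul_one]; simp only [Matrix.mul_assoc]
    _ = 1 := by rw [hdiag, Matrix.mul_one, hXX']

/-- Equating the (2,2) blocks of the two representations of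
`ρ(M⁻¹A)`: `∑ j, ω j S(ζⱼ)⁻¹ = ∑ i, ρ(λ i) y⁽ⁱ⁾ (ŷ⁽ⁱ⁾)ᴴ`. -/
theorem stmt_6 {d s N : ℕ}
    (B MB : Matrix (Fin d) (Fin d) ℂ) (F MF : Matrix (Fin d) (Fin s) ℂ)
    (E ME : Matrix (Fin s) (Fin d) ℂ) (C MC : Matrix (Fin s) (Fin s) ℂ)
    (A M X Xh : Matrix (Fin d ⊕ Fin s) (Fin d ⊕ Fin s) ℂ)
    (lam : Fin d ⊕ Fin s → ℂ)
    (hA : A = Matrix.fromBlocks B F E C)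
    (hMm : M = Matrix.fromBlocks MB MF ME MC)
    (hM : IsUnit M)
    (hbi : Xhᴴ * M * X = 1)
    (hright : ∀ i, A *ᵥ (fun r => X r i) = lam i • (M *ᵥ (fun r => X r i)))
    (hleft : ∀ i, (fun r => star (Xh r i)) ᵥ* A = lam i • ((fun r => star (Xh r i)) ᵥ* M))
    (ζp : Fin N → ℂ) (ω : Fin N → ℂ)
    (hdist : Function.Injective ζp)
    (hζ : ∀ i j, ζp j ≠ lam i)
    (hBinv : ∀ j, IsUnit (B - ζp j • MB))
    (hSinv : ∀ j, IsUnit ((C - ζp j • MC) -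
      (E - ζp j • ME) * (B - ζp j • MB)⁻¹ * (F - ζp j • MF))) :
    ∑ j, ω j • ((C - ζp j • MC) -
        (E - ζp j • ME) * (B - ζp j • MB)⁻¹ * (F - ζp j • MF))⁻¹ =
      ∑ i, (∑ j, ω j / (lam i - ζp j)) •
        Matrix.vecMulVec (fun a => X (Sum.inr a) i) (fun b => star (Xh (Sum.inr b) i)) := by
  have hblocks : ∀ j, A - ζp j • M =
      Matrix.fromBlocks (B - ζp j • MB) (F - ζp j • MF) (E - ζp j • ME) (C - ζp j • MC) := by
    intro j
    rw [hA, hMm]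
    ext x y
    cases x <;> cases y <;> simp [Matrix.fromBlocks]
  have hterm : ∀ j a b, ((C - ζp j • MC) -
      (E - ζp j • ME) * (B - ζp j • MB)⁻¹ * (F - ζp j • MF))⁻¹ a b =
      ∑ i, X (Sum.inr a) i * (lam i - ζp j)⁻¹ * star (Xh (Sum.inr b) i) := by
    intro j a b
    rw [← schur_block_inv _ _ _ _ (hBinv j) (hSinv j), ← hblocks j]
    rw [resolvent_decomp A M X Xh lam hbi hright (ζp j) (fun i => hζ i j)]
    simp only [Matrix.toBlocks₂₂, Matrix.of_apply, Matrix.mul_apply]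
    refine Finset.sum_congr rfl fun i _ => ?_
    rw [← Matrix.mul_apply, Matrix.mul_diagonal, Matrix.conjTranspose_apply]
  ext a b
  simp only [Matrix.sum_apply, Matrix.smul_apply, smul_eq_mul, Matrix.vecMulVec_apply]
  simp_rw [hterm, Finset.mul_sum, Finset.sum_mul]
  rw [Finset.sum_comm]
  refine Finset.sum_congr rfl fun i _ => Finset.sum_congr rfl fun j _ => ?_
  rw [div_eq_mul_inv]
  ring
end

section
/- (Theorem 3.1, first part.) Suppose ζ_j ≠ λ_i for all i, j, and that B(ζ_j) and S(ζ_j) are invertible for j = 1,…,N. Let K = {i : ρ(λ_i) ≠ 0}, where ρ(ζ) = Σ_{j=1}^{N} ω_j/(ζ − ζ_j), and let T_u = Σ_{j=1}^{N} ω_j B(ζ_j)^{-1} F(ζ_j) S(ζ_j)^{-1}. If rank(T_u) = dim span{u^{(i)} : i ∈ K}, then the column space of T_u equals span{u^{(i)} : i ∈ K}. -/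
open Matrix BigOperators

/-- (Theorem 3.1, first part.) If the rank of
`T_u = ∑ j, ω j B(ζⱼ)⁻¹ F(ζⱼ) S(ζⱼ)⁻¹` equals the dimension of `span {u⁽ⁱ⁾ : ρ(λ i) ≠ 0}`,
then the column space of `T_u` equals that span. -/
theorem stmt_7 {d s N : ℕ}
    (B MB : Matrix (Fin d) (Fin d) ℂ) (F MF : Matrix (Fin d) (Fin s) ℂ)
    (E ME : Matrix (Fin s) (Fin d) ℂ) (C MC : Matrix (Fin s) (Fin s) ℂ)
    (A M X Xh : Matrix (Fin d ⊕ Fin s) (Fin d ⊕ Fin s) ℂ)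
    (lam : Fin d ⊕ Fin s → ℂ)
    (hA : A = Matrix.fromBlocks B F E C)
    (hMm : M = Matrix.fromBlocks MB MF ME MC)
    (hM : IsUnit M)
    (hbi : Xhᴴ * M * X = 1)
    (hright : ∀ i, A *ᵥ (fun r => X r i) = lam i • (M *ᵥ (fun r => X r i)))
    (hleft : ∀ i, (fun r => star (Xh r i)) ᵥ* A = lam i • ((fun r => star (Xh r i)) ᵥ* M))
    (ζp : Fin N → ℂ) (ω : Fin N → ℂ)
    (hdist : Function.Injective ζp)
    (hζ : ∀ i j, ζp j ≠ lam i)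
    (hBinv : ∀ j, IsUnit (B - ζp j • MB))
    (hSinv : ∀ j, IsUnit ((C - ζp j • MC) -
      (E - ζp j • ME) * (B - ζp j • MB)⁻¹ * (F - ζp j • MF)))
    (Tu : Matrix (Fin d) (Fin s) ℂ)
    (hTu : Tu = ∑ j, ω j • ((B - ζp j • MB)⁻¹ * (F - ζp j • MF) *
        ((C - ζp j • MC) - (E - ζp j • ME) * (B - ζp j • MB)⁻¹ * (F - ζp j • MF))⁻¹))
    (hrank : Tu.rank = Module.finrank ℂ (Submodule.span ℂ
        {v : Fin d → ℂ | ∃ i, (∑ j, ω j / (lam i - ζp j)) ≠ 0 ∧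
          v = fun a => X (Sum.inl a) i})) :
    LinearMap.range Tu.mulVecLin = Submodule.span ℂ
        {v : Fin d → ℂ | ∃ i, (∑ j, ω j / (lam i - ζp j)) ≠ 0 ∧
          v = fun a => X (Sum.inl a) i} := by
  classical
  set S : Set (Fin d → ℂ) :=
    {v : Fin d → ℂ | ∃ i, (∑ j, ω j / (lam i - ζp j)) ≠ 0 ∧
      v = fun a => X (Sum.inl a) i} with hS
  set Xi : Matrix (Fin d ⊕ Fin s) (Fin d ⊕ Fin s) ℂ := Xhᴴ * M with hXi
  have h1 : Xi * X = 1 := hbi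
  have h2 : X * Xi = 1 := mul_eq_one_comm.mp h1
  have hMdet : IsUnit M.det := (Matrix.isUnit_iff_isUnit_det M).mp hM
  have hMinv : M * M⁻¹ = 1 := Matrix.mul_nonsing_inv M hMdet
  -- A * X = M * X * diagonal lam
  have hAX : A * X = M * X * Matrix.diagonal lam := by
    ext r i
    have h := congrFun (hright i) r
    simp only [Matrix.mulVec, dotProduct, Pi.smul_apply, smul_eq_mul] at h
    rw [Matrix.mul_diagonal, mul_comm]
    simp only [Matrix.mul_apply]
    exact h
  have hAfac : A = M * X * Matrix.diagonal lam * Xi := by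
    calc A = A * (X * Xi) := by rw [h2, Matrix.mul_one]
      _ = A * X * Xi := by rw [Matrix.mul_assoc]
      _ = M * X * Matrix.diagonal lam * Xi := by rw [hAX]
  have hζ' : ∀ (i) (j : Fin N), lam i - ζp j ≠ 0 := fun i j =>
    sub_ne_zero.mpr (Ne.symm (hζ i j))
  -- factorization of A - ζ • M
  have hfact : ∀ j : Fin N, A - ζp j • M
      = M * X * Matrix.diagonal (fun i => lam i - ζp j) * Xi := by
    intro j
    have hd : Matrix.diagonal (fun i => lam i - ζp j)
        = Matrix.diagonal lam - ζp j • (1 : Matrix (Fin d ⊕ Fin s) (Fin d ⊕ Fin s) ℂ) := by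
      ext a b
      by_cases hab : a = b <;>
        simp [Matrix.diagonal_apply, hab, Matrix.one_apply, Matrix.sub_apply]
    have hm : M * X * (ζp j • (1 : Matrix (Fin d ⊕ Fin s) (Fin d ⊕ Fin s) ℂ)) * Xi
        = ζp j • M := by
      rw [Matrix.mul_smul, Matrix.mul_one, Matrix.smul_mul, Matrix.mul_assoc, h2,
        Matrix.mul_one]
    rw [hd, Matrix.mul_sub, Matrix.sub_mul, hm, ← hAfac]
  -- explicit inverse of A - ζ • M
  have hinv : ∀ j : Fin N, (A - ζp j • M) *
      (X * Matrix.diagonal (fun i => (lam i - ζp j)⁻¹) * Xi * M⁻¹) = 1 := by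
    intro j
    rw [hfact j]
    have hdd : Matrix.diagonal (fun i => lam i - ζp j) *
        Matrix.diagonal (fun i => (lam i - ζp j)⁻¹) = 1 := by
      rw [Matrix.diagonal_mul_diagonal]
      rw [show (fun i => (lam i - ζp j) * (lam i - ζp j)⁻¹) = fun _ => (1 : ℂ) from
        funext fun i => mul_inv_cancel₀ (hζ' i j)]
      exact Matrix.diagonal_one
    simp only [Matrix.mul_assoc]
    rw [← Matrix.mul_assoc Xi X, h1, Matrix.one_mul,
      ← Matrix.mul_assoc (Matrix.diagonal (fun i => lam i - ζp j)), hdd, Matrix.one_mul,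
      ← Matrix.mul_assoc X Xi, h2, Matrix.one_mul, hMinv]
  have hinveq : ∀ j : Fin N, (A - ζp j • M)⁻¹
      = X * Matrix.diagonal (fun i => (lam i - ζp j)⁻¹) * Xi * M⁻¹ := fun j =>
    Matrix.inv_eq_right_inv (hinv j)
  -- block structure of A - ζ • M
  have hblkmat : ∀ j : Fin N, A - ζp j • M = Matrix.fromBlocks
      (B - ζp j • MB) (F - ζp j • MF) (E - ζp j • ME) (C - ζp j • MC) := by
    intro j
    rw [hA, hMm]
    ext (a | a) (b | b) <;>
      simp [Matrix.sub_apply, Matrix.smul_apply, Matrix.fromBlocks]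
  -- the 1,2 block of the inverse
  have hblk : ∀ j : Fin N, ((A - ζp j • M)⁻¹).toBlocks₁₂
      = -((B - ζp j • MB)⁻¹ * (F - ζp j • MF) *
        ((C - ζp j • MC) - (E - ζp j • ME) * (B - ζp j • MB)⁻¹ * (F - ζp j • MF))⁻¹) := by
    intro j
    letI iB : Invertible (B - ζp j • MB) := (hBinv j).invertible
    have hiB : ⅟(B - ζp j • MB) = (B - ζp j • MB)⁻¹ := invOf_eq_nonsing_inv _
    letI iS : Invertible ((C - ζp j • MC) -
        (E - ζp j • ME) * ⅟(B - ζp j • MB) * (F - ζp j • MF)) := by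
      rw [hiB]; exact (hSinv j).invertible
    letI iA : Invertible (Matrix.fromBlocks
        (B - ζp j • MB) (F - ζp j • MF) (E - ζp j • ME) (C - ζp j • MC)) := by
      apply invertibleOfRightInverse _
        (X * Matrix.diagonal (fun i => (lam i - ζp j)⁻¹) * Xi * M⁻¹)
      rw [← hblkmat j]; exact hinv j
    have := Matrix.invOf_fromBlocks₁₁_eq (B - ζp j • MB) (F - ζp j • MF)
      (E - ζp j • ME) (C - ζp j • MC)
    rw [hblkmat j, ← invOf_eq_nonsing_inv, this]
    simp only [Matrix.toBlocks_fromBlocks₁₂, invOf_eq_nonsing_inv]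
  -- the resolvent sum
  set g : (Fin d ⊕ Fin s) → ℂ := fun i => ∑ j, ω j * (lam i - ζp j)⁻¹ with hg
  set R : Matrix (Fin d ⊕ Fin s) (Fin d ⊕ Fin s) ℂ := ∑ j, ω j • (A - ζp j • M)⁻¹ with hR
  have hRfac : R = X * Matrix.diagonal g * (Xi * M⁻¹) := by
    rw [hR]
    have : ∀ j : Fin N, ω j • (A - ζp j • M)⁻¹
        = X * (ω j • Matrix.diagonal (fun i => (lam i - ζp j)⁻¹)) * (Xi * M⁻¹) := by
      intro j
      rw [hinveq j]
      simp only [Matrix.mul_smul, Matrix.smul_mul, Matrix.mul_assoc]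
    rw [Finset.sum_congr rfl fun j _ => this j, ← Finset.sum_mul, ← Finset.mul_sum]
    congr 2
    ext a b
    by_cases hab : a = b <;>
      simp [Matrix.sum_apply, Matrix.diagonal_apply, hab, hg]
  -- the 1,2 block of R equals -Tu
  have hRblk : R.toBlocks₁₂ = -Tu := by
    rw [hR, hTu]
    have : ∀ j : Fin N, (ω j • (A - ζp j • M)⁻¹).toBlocks₁₂
        = ω j • ((A - ζp j • M)⁻¹).toBlocks₁₂ := fun j => rfl
    have hsum : (∑ j, ω j • (A - ζp j • M)⁻¹).toBlocks₁₂
        = ∑ j, ω j • ((A - ζp j • M)⁻¹).toBlocks₁₂ := by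
      ext a b; simp [Matrix.toBlocks₁₂, Matrix.sum_apply]
    rw [hsum, ← Finset.sum_neg_distrib]
    exact Finset.sum_congr rfl fun j _ => by rw [hblk j, smul_neg]
  -- membership of columns in the span
  have hmem : ∀ v : Fin s → ℂ, Tu *ᵥ v ∈ Submodule.span ℂ S := by
    intro v
    set w : (Fin d ⊕ Fin s) → ℂ := Sum.elim 0 v with hw
    have htop : (fun a => (R *ᵥ w) (Sum.inl a)) = (-Tu) *ᵥ v := by
      funext a
      rw [← hRblk]
      simp only [Matrix.mulVec, dotProduct, Matrix.toBlocks₁₂, Matrix.of_apply]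
      rw [Fintype.sum_sum_type]
      simp [hw]
    have hmem' : (fun a => (R *ᵥ w) (Sum.inl a)) ∈ Submodule.span ℂ S := by
      set c : (Fin d ⊕ Fin s) → ℂ := (Xi * M⁻¹) *ᵥ w with hc
      have hx : R *ᵥ w = X *ᵥ (fun i => g i * c i) := by
        rw [hRfac, ← Matrix.mulVec_mulVec, ← Matrix.mulVec_mulVec, ← hc]
        have hdc : Matrix.diagonal g *ᵥ c = fun i => g i * c i :=
          funext fun i => Matrix.mulVec_diagonal g c i
        rw [hdc]
      have hexp : (fun a => (R *ᵥ w) (Sum.inl a))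
          = ∑ i, (g i * c i) • (fun a => X (Sum.inl a) i) := by
        funext a
        rw [hx]
        simp [Matrix.mulVec, dotProduct, Finset.sum_apply, mul_comm]
      rw [hexp]
      apply Submodule.sum_mem
      intro i _
      by_cases hgi : g i = 0
      · rw [hgi, zero_mul, zero_smul]; exact Submodule.zero_mem _
      · apply Submodule.smul_mem
        apply Submodule.subset_span
        refine ⟨i, ?_, rfl⟩
        rwa [show (∑ j, ω j / (lam i - ζp j)) = g i by
          simp [hg, div_eq_mul_inv]]
    have : Tu *ᵥ v = -(fun a => (R *ᵥ w) (Sum.inl a)) := by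
      rw [htop, Matrix.neg_mulVec, neg_neg]
    rw [this]
    exact neg_mem hmem'
  -- conclude
  have hle : LinearMap.range Tu.mulVecLin ≤ Submodule.span ℂ S := by
    rintro x ⟨v, rfl⟩
    exact hmem v
  exact Submodule.eq_of_le_of_finrank_eq hle hrank
end

section
/- (Theorem 3.1, second part.) Suppose ζ_j ≠ λ_i for all i, j, and that B(ζ_j) and S(ζ_j) are invertible for j = 1,…,N. Let K = {i : ρ(λ_i) ≠ 0}, where ρ(ζ) = Σ_{j=1}^{N} ω_j/(ζ − ζ_j), and let T_y = Σ_{j=1}^{N} ω_j S(ζ_j)^{-1}. If rank(T_y) = dim span{y^{(i)} : i ∈ K}, then the column space of T_y equals span{y^{(i)} : i ∈ K}. -/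
open Matrix BigOperators

private lemma schur_aux {d s : ℕ} (Bz : Matrix (Fin d) (Fin d) ℂ) (Fz : Matrix (Fin d) (Fin s) ℂ)
    (Ez : Matrix (Fin s) (Fin d) ℂ) (Cz : Matrix (Fin s) (Fin s) ℂ)
    (hB1 : Bz * Bz⁻¹ = 1)
    (hS1 : (Cz - Ez * Bz⁻¹ * Fz) * (Cz - Ez * Bz⁻¹ * Fz)⁻¹ = 1) :
    (Matrix.fromBlocks Bz Fz Ez Cz) * (Matrix.fromBlocks
      (Bz⁻¹ + Bz⁻¹ * Fz * (Cz - Ez * Bz⁻¹ * Fz)⁻¹ * Ez * Bz⁻¹)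
      (-(Bz⁻¹ * Fz * (Cz - Ez * Bz⁻¹ * Fz)⁻¹))
      (-((Cz - Ez * Bz⁻¹ * Fz)⁻¹ * Ez * Bz⁻¹))
      (Cz - Ez * Bz⁻¹ * Fz)⁻¹) = 1 := by
    set Sz := Cz - Ez * Bz⁻¹ * Fz with hSz
    rw [Matrix.fromBlocks_multiply, ← Matrix.fromBlocks_one, Matrix.fromBlocks_inj]
    refine ⟨?_, ?_, ?_, ?_⟩
    · rw [Matrix.mul_add, Matrix.mul_neg]
      have h3 : Bz * (Bz⁻¹ * Fz * Sz⁻¹ * Ez * Bz⁻¹) = Fz * (Sz⁻¹ * Ez * Bz⁻¹) := by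
        rw [show Bz⁻¹ * Fz * Sz⁻¹ * Ez * Bz⁻¹ = Bz⁻¹ * (Fz * (Sz⁻¹ * Ez * Bz⁻¹)) by
          simp only [Matrix.mul_assoc], ← Matrix.mul_assoc, hB1, Matrix.one_mul]
      rw [h3, hB1]; abel
    · rw [Matrix.mul_neg]
      have h3 : Bz * (Bz⁻¹ * Fz * Sz⁻¹) = Fz * Sz⁻¹ := by
        rw [show Bz⁻¹ * Fz * Sz⁻¹ = Bz⁻¹ * (Fz * Sz⁻¹) by simp only [Matrix.mul_assoc],
          ← Matrix.mul_assoc, hB1, Matrix.one_mul]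
      rw [h3]; abel
    · rw [Matrix.mul_add, Matrix.mul_neg]
      have h1 : Sz * (Sz⁻¹ * Ez * Bz⁻¹) = Ez * Bz⁻¹ := by
        rw [show Sz⁻¹ * Ez * Bz⁻¹ = Sz⁻¹ * (Ez * Bz⁻¹) by simp only [Matrix.mul_assoc],
          ← Matrix.mul_assoc, hS1, Matrix.one_mul]
      rw [hSz, Matrix.sub_mul] at h1
      have h2 := sub_eq_iff_eq_add.mp h1
      have h3 : Cz * (Sz⁻¹ * Ez * Bz⁻¹)
          = Ez * (Bz⁻¹ * Fz * Sz⁻¹ * Ez * Bz⁻¹) + Ez * Bz⁻¹ := by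
        rw [h2]; simp only [hSz, Matrix.mul_assoc]; abel
      rw [h3]; abel
    · rw [Matrix.mul_neg]
      have h3 : Ez * (Bz⁻¹ * Fz * Sz⁻¹) = (Ez * Bz⁻¹ * Fz) * Sz⁻¹ := by
        simp only [Matrix.mul_assoc]
      rw [h3]
      have h4 : Cz * Sz⁻¹ - Ez * Bz⁻¹ * Fz * Sz⁻¹ = Sz * Sz⁻¹ := by
        rw [hSz, Matrix.sub_mul]
      rw [sub_eq_iff_eq_add.mp h4, hS1]; abel

/-- (Theorem 3.1, second part.) If the rank of
`T_y = ∑ j, ω j S(ζⱼ)⁻¹` equals the dimension of `span {y⁽ⁱ⁾ : ρ(λ i) ≠ 0}`,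
then the column space of `T_y` equals that span. -/
theorem stmt_8 {d s N : ℕ}
    (B MB : Matrix (Fin d) (Fin d) ℂ) (F MF : Matrix (Fin d) (Fin s) ℂ)
    (E ME : Matrix (Fin s) (Fin d) ℂ) (C MC : Matrix (Fin s) (Fin s) ℂ)
    (A M X Xh : Matrix (Fin d ⊕ Fin s) (Fin d ⊕ Fin s) ℂ)
    (lam : Fin d ⊕ Fin s → ℂ)
    (hA : A = Matrix.fromBlocks B F E C)
    (hMm : M = Matrix.fromBlocks MB MF ME MC)
    (hM : IsUnit M)
    (hbi : Xhᴴ * M * X = 1)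
    (hright : ∀ i, A *ᵥ (fun r => X r i) = lam i • (M *ᵥ (fun r => X r i)))
    (hleft : ∀ i, (fun r => star (Xh r i)) ᵥ* A = lam i • ((fun r => star (Xh r i)) ᵥ* M))
    (ζp : Fin N → ℂ) (ω : Fin N → ℂ)
    (hdist : Function.Injective ζp)
    (hζ : ∀ i j, ζp j ≠ lam i)
    (hBinv : ∀ j, IsUnit (B - ζp j • MB))
    (hSinv : ∀ j, IsUnit ((C - ζp j • MC) -
      (E - ζp j • ME) * (B - ζp j • MB)⁻¹ * (F - ζp j • MF)))
    (Ty : Matrix (Fin s) (Fin s) ℂ)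
    (hTy : Ty = ∑ j, ω j • ((C - ζp j • MC) -
        (E - ζp j • ME) * (B - ζp j • MB)⁻¹ * (F - ζp j • MF))⁻¹)
    (hrank : Ty.rank = Module.finrank ℂ (Submodule.span ℂ
        {v : Fin s → ℂ | ∃ i, (∑ j, ω j / (lam i - ζp j)) ≠ 0 ∧
          v = fun a => X (Sum.inr a) i})) :
    LinearMap.range Ty.mulVecLin = Submodule.span ℂ
        {v : Fin s → ℂ | ∃ i, (∑ j, ω j / (lam i - ζp j)) ≠ 0 ∧
          v = fun a => X (Sum.inr a) i} := by
  -- A * X = M * X * diagonal lam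
  have hAX : A * X = M * X * Matrix.diagonal lam := by
    ext r i
    have h := congrFun (hright i) r
    simp only [Matrix.mulVec, dotProduct, Pi.smul_apply, smul_eq_mul] at h
    rw [Matrix.mul_diagonal, Matrix.mul_apply, Matrix.mul_apply, h]
    ring
  -- invertibility facts for X
  have hXl : X * (Xhᴴ * M) = 1 := mul_eq_one_comm.mp hbi
  have hMXXh : M * (X * Xhᴴ) = 1 := by
    rw [← Matrix.mul_assoc] at hXl
    exact mul_eq_one_comm.mp ((Matrix.mul_assoc X Xhᴴ M) ▸ hXl)
  -- the resolvent identity for each j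
  have hres : ∀ j : Fin N,
      (A - ζp j • M) * (X * Matrix.diagonal (fun i => (lam i - ζp j)⁻¹) * Xhᴴ) = 1 := by
    intro j
    have h1 : (A - ζp j • M) * X = M * X * Matrix.diagonal (fun i => lam i - ζp j) := by
      have hd : Matrix.diagonal (fun i : Fin d ⊕ Fin s => lam i - ζp j)
          = Matrix.diagonal lam - ζp j • (1 : Matrix (Fin d ⊕ Fin s) (Fin d ⊕ Fin s) ℂ) := by
        rw [Matrix.smul_one_eq_diagonal, Matrix.diagonal_sub]
      rw [hd, Matrix.sub_mul, Matrix.mul_sub, Matrix.smul_mul, hAX]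
      congr 1
      rw [Matrix.mul_smul, Matrix.mul_one]
    have h2 : Matrix.diagonal (fun i : Fin d ⊕ Fin s => lam i - ζp j) *
        Matrix.diagonal (fun i => (lam i - ζp j)⁻¹) = 1 := by
      rw [Matrix.diagonal_mul_diagonal]
      have he : (fun i : Fin d ⊕ Fin s => (lam i - ζp j) * (lam i - ζp j)⁻¹)
          = fun _ => 1 := by
        funext i
        exact mul_inv_cancel₀ (sub_ne_zero_of_ne ((hζ i j).symm))
      rw [he, Matrix.diagonal_one]
    calc (A - ζp j • M) * (X * Matrix.diagonal (fun i => (lam i - ζp j)⁻¹) * Xhᴴ)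
        = ((A - ζp j • M) * X) * Matrix.diagonal (fun i => (lam i - ζp j)⁻¹) * Xhᴴ := by
          simp only [Matrix.mul_assoc]
      _ = M * X * (Matrix.diagonal (fun i : Fin d ⊕ Fin s => lam i - ζp j) *
            Matrix.diagonal (fun i => (lam i - ζp j)⁻¹)) * Xhᴴ := by
          rw [h1]; simp only [Matrix.mul_assoc]
      _ = M * (X * Xhᴴ) := by rw [h2]; simp only [Matrix.mul_one, Matrix.mul_assoc]
      _ = 1 := hMXXh
  -- Schur block inverse: identify S(zeta_j)^{-1} with bottom-right block of resolvent
  have hschur : ∀ j : Fin N,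
      ((C - ζp j • MC) - (E - ζp j • ME) * (B - ζp j • MB)⁻¹ * (F - ζp j • MF))⁻¹
        = (X * Matrix.diagonal (fun i => (lam i - ζp j)⁻¹) * Xhᴴ).toBlocks₂₂ := by
    intro j
    have hB1 : (B - ζp j • MB) * (B - ζp j • MB)⁻¹ = 1 :=
      Matrix.mul_nonsing_inv _ ((Matrix.isUnit_iff_isUnit_det _).mp (hBinv j))
    have hS1 : ((C - ζp j • MC) - (E - ζp j • ME) * (B - ζp j • MB)⁻¹ * (F - ζp j • MF)) *
        ((C - ζp j • MC) - (E - ζp j • ME) * (B - ζp j • MB)⁻¹ * (F - ζp j • MF))⁻¹ = 1 :=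
      Matrix.mul_nonsing_inv _ ((Matrix.isUnit_iff_isUnit_det _).mp (hSinv j))
    have hAW := schur_aux (B - ζp j • MB) (F - ζp j • MF) (E - ζp j • ME) (C - ζp j • MC) hB1 hS1
    have hblk : A - ζp j • M = Matrix.fromBlocks (B - ζp j • MB) (F - ζp j • MF)
        (E - ζp j • ME) (C - ζp j • MC) := by
      ext (r | r) (c | c) <;>
        simp [hA, hMm, Matrix.sub_apply, Matrix.smul_apply, Matrix.fromBlocks]
    set W := Matrix.fromBlocks
      ((B - ζp j • MB)⁻¹ + (B - ζp j • MB)⁻¹ * (F - ζp j • MF) *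
        ((C - ζp j • MC) - (E - ζp j • ME) * (B - ζp j • MB)⁻¹ * (F - ζp j • MF))⁻¹ *
        (E - ζp j • ME) * (B - ζp j • MB)⁻¹)
      (-((B - ζp j • MB)⁻¹ * (F - ζp j • MF) *
        ((C - ζp j • MC) - (E - ζp j • ME) * (B - ζp j • MB)⁻¹ * (F - ζp j • MF))⁻¹))
      (-(((C - ζp j • MC) - (E - ζp j • ME) * (B - ζp j • MB)⁻¹ * (F - ζp j • MF))⁻¹ *
        (E - ζp j • ME) * (B - ζp j • MB)⁻¹))
      ((C - ζp j • MC) - (E - ζp j • ME) * (B - ζp j • MB)⁻¹ * (F - ζp j • MF))⁻¹ with hW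
    have hGA : (X * Matrix.diagonal (fun i => (lam i - ζp j)⁻¹) * Xhᴴ) * (A - ζp j • M) = 1 :=
      mul_eq_one_comm.mp (hres j)
    have hAW' : (A - ζp j • M) * W = 1 := by rw [hblk]; exact hAW
    have hGW : (X * Matrix.diagonal (fun i => (lam i - ζp j)⁻¹) * Xhᴴ) = W := by
      calc (X * Matrix.diagonal (fun i => (lam i - ζp j)⁻¹) * Xhᴴ)
          = (X * Matrix.diagonal (fun i => (lam i - ζp j)⁻¹) * Xhᴴ) * ((A - ζp j • M) * W) := by
            rw [hAW', Matrix.mul_one]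
        _ = ((X * Matrix.diagonal (fun i => (lam i - ζp j)⁻¹) * Xhᴴ) * (A - ζp j • M)) * W :=
            (Matrix.mul_assoc _ _ _).symm
        _ = W := by rw [hGA, Matrix.one_mul]
    rw [hGW, hW]
    rfl
  -- entry formula for X * diagonal f * Xh^H
  have hentry : ∀ (f : Fin d ⊕ Fin s → ℂ) (p q : Fin d ⊕ Fin s),
      (X * Matrix.diagonal f * Xhᴴ) p q = ∑ i, X p i * (f i * star (Xh q i)) := by
    intro f p q
    rw [Matrix.mul_apply]
    refine Finset.sum_congr rfl fun i _ => ?_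
    rw [Matrix.mul_diagonal, Matrix.conjTranspose_apply]
    ring
  -- Ty entrywise as bottom-right block of the filtered spectral projector
  have hTy2 : ∀ a b, Ty a b
      = ∑ i, X (Sum.inr a) i * ((∑ j, ω j / (lam i - ζp j)) * star (Xh (Sum.inr b) i)) := by
    intro a b
    rw [hTy]
    have hterm : ∀ j : Fin N, (ω j • ((C - ζp j • MC) -
        (E - ζp j • ME) * (B - ζp j • MB)⁻¹ * (F - ζp j • MF))⁻¹) a b
        = ω j * ∑ i, X (Sum.inr a) i * ((lam i - ζp j)⁻¹ * star (Xh (Sum.inr b) i)) := by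
      intro j
      rw [Matrix.smul_apply, hschur j, smul_eq_mul]
      congr 1
      exact hentry _ _ _
    rw [Matrix.sum_apply]
    simp only [hterm, Finset.mul_sum]
    rw [Finset.sum_comm]
    refine Finset.sum_congr rfl fun i _ => ?_
    simp only [div_eq_mul_inv, Finset.sum_mul, Finset.mul_sum]
    exact Finset.sum_congr rfl fun j _ => by ring
  -- range is contained in the span
  have hle : LinearMap.range Ty.mulVecLin ≤ Submodule.span ℂ
      {v : Fin s → ℂ | ∃ i, (∑ j, ω j / (lam i - ζp j)) ≠ 0 ∧
        v = fun a => X (Sum.inr a) i} := by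
    rintro w ⟨v, rfl⟩
    have hw : Ty.mulVecLin v = ∑ i, ((∑ j, ω j / (lam i - ζp j)) *
        (∑ b, star (Xh (Sum.inr b) i) * v b)) • (fun a => X (Sum.inr a) i) := by
      funext a
      rw [Matrix.mulVecLin_apply, Matrix.mulVec, Finset.sum_apply]
      simp only [Pi.smul_apply, smul_eq_mul, dotProduct]
      simp only [hTy2, Finset.sum_mul]
      rw [Finset.sum_comm]
      refine Finset.sum_congr rfl fun i _ => ?_
      simp only [Finset.mul_sum, Finset.sum_mul]
      rw [Finset.sum_comm]
      exact Finset.sum_congr rfl fun x _ => Finset.sum_congr rfl fun b _ => by ring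
    rw [hw]
    refine Submodule.sum_mem _ fun i _ => ?_
    by_cases hρ : (∑ j, ω j / (lam i - ζp j)) = 0
    · rw [hρ, zero_mul, zero_smul]; exact Submodule.zero_mem _
    · exact Submodule.smul_mem _ _ (Submodule.subset_span ⟨i, hρ, rfl⟩)
  -- conclude by dimension count
  exact Submodule.eq_of_le_of_finrank_eq hle hrank
end

section
/- (Inclusion (3.14).) Let x = (u; y) with u ∈ ℂ^d, y ∈ ℂ^s satisfy A x = λ M x for some λ ∈ ℂ, and suppose B(λ) = B − λM_B is invertible. Let G ∈ ℂ^{s×g} be a matrix with y in its column space, let V_φ, V̂_φ ∈ ℂ^{d×φ} be arbitrary matrices, and let ζ ∈ ℂ. Then u lies in the sum of the three subspaces: the column space of V_φ, the column space of (I − V_φ V̂_φ^H M_B) B(λ)^{-1} F(ζ) G, and the column space of (I − V_φ V̂_φ^H M_B) B(λ)^{-1} M_F G, where F(ζ) = F − ζM_F. -/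
open Matrix

/-- (Inclusion (3.14).) With `A x = λ M x`, `x = (u; y)`, `B(λ)`
invertible, `y` in the column space of `G`, arbitrary `V_φ, V̂_φ` and any `ζ`, the
vector `u` lies in the sum of the column spaces of `V_φ`,
`(I - V_φ V̂_φᴴ M_B) B(λ)⁻¹ F(ζ) G` and `(I - V_φ V̂_φᴴ M_B) B(λ)⁻¹ M_F G`. -/
theorem stmt_12 {d s g φ : ℕ}
    (B MB : Matrix (Fin d) (Fin d) ℂ) (F MF : Matrix (Fin d) (Fin s) ℂ)
    (E ME : Matrix (Fin s) (Fin d) ℂ) (C MC : Matrix (Fin s) (Fin s) ℂ)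
    (A M : Matrix (Fin d ⊕ Fin s) (Fin d ⊕ Fin s) ℂ)
    (hA : A = Matrix.fromBlocks B F E C)
    (hMm : M = Matrix.fromBlocks MB MF ME MC)
    (x : Fin d ⊕ Fin s → ℂ) (lam : ℂ)
    (heig : A *ᵥ x = lam • (M *ᵥ x))
    (hBinv : IsUnit (B - lam • MB))
    (G : Matrix (Fin s) (Fin g) ℂ)
    (hy : (fun b => x (Sum.inr b)) ∈ LinearMap.range G.mulVecLin)
    (Vφ Vhφ : Matrix (Fin d) (Fin φ) ℂ) (ζ : ℂ) :
    (fun a => x (Sum.inl a)) ∈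
      LinearMap.range Vφ.mulVecLin ⊔
      LinearMap.range ((1 - Vφ * Vhφᴴ * MB) * (B - lam • MB)⁻¹ * (F - ζ • MF) * G).mulVecLin ⊔
      LinearMap.range ((1 - Vφ * Vhφᴴ * MB) * (B - lam • MB)⁻¹ * MF * G).mulVecLin := by
  obtain ⟨w, hw⟩ := hy
  set u : Fin d → ℂ := fun a => x (Sum.inl a) with hu_def
  set y : Fin s → ℂ := fun b => x (Sum.inr b) with hy_def
  have hx : x = Sum.elim u y := by funext i; cases i <;> rfl
  rw [hA, hMm, hx, Matrix.fromBlocks_mulVec, Matrix.fromBlocks_mulVec] at heig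
  have htop : B *ᵥ u + F *ᵥ y = lam • (MB *ᵥ u) + lam • (MF *ᵥ y) := by
    funext a
    have := congrFun heig (Sum.inl a)
    simpa [smul_add, mul_add] using this
  have hdet := (Matrix.isUnit_iff_isUnit_det _).mp hBinv
  have hinv : (B - lam • MB)⁻¹ * (B - lam • MB) = 1 := Matrix.nonsing_inv_mul _ hdet
  have h1 : (B - lam • MB) *ᵥ u = lam • (MF *ᵥ y) - F *ᵥ y := by
    rw [Matrix.sub_mulVec, Matrix.smul_mulVec]
    have := htop
    abel_nf
    abel_nf at this
    linear_combination (norm := abel) this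
  have key : u = (B - lam • MB)⁻¹ *ᵥ (lam • (MF *ᵥ y) - F *ᵥ y) := by
    rw [← h1, Matrix.mulVec_mulVec, hinv, Matrix.one_mulVec]
  refine Submodule.mem_sup.mpr ⟨_, Submodule.mem_sup.mpr ⟨_,
      LinearMap.mem_range_self _ (Vhφᴴ *ᵥ (MB *ᵥ u)),
      _, LinearMap.mem_range_self _ (-w), rfl⟩,
    _, LinearMap.mem_range_self _ ((lam - ζ) • w), ?_⟩
  have hw' : G *ᵥ w = y := hw
  simp only [Matrix.mulVecLin_apply, Matrix.mulVec_neg, Matrix.mulVec_smul,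
    ← Matrix.mulVec_mulVec, hw']
  conv_rhs => rw [key]
  rw [key]
  simp only [Matrix.sub_mulVec, Matrix.one_mulVec, Matrix.smul_mulVec,
    Matrix.mulVec_sub, Matrix.mulVec_smul, ← Matrix.mulVec_mulVec]
  module
end

section
/- (Theorem 3.2.) Let ζ_c ∈ ℂ with ζ_c ≠ δ_j for all j = 1,…,d, and let λ ∈ ℂ be such that λ ≠ δ_j for all j and |λ − ζ_c| < |δ_j − ζ_c| for all j = φ+1,…,d. Then the series Σ_{k=0}^{∞} B̃(ζ_c) [(λ − ζ_c) M_B B̃(ζ_c)]^k converges, and its sum equals (I − V_φ V̂_φ^H M_B) B(λ)^{-1}. -/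
/-!
Biorthogonality `V̂ᴴ M_B V = I` makes the eigenvector matrix `V` invertible with inverse
`V̂ᴴ M_B`, so the pencil is simultaneously diagonalised:
`B - ζ M_B = M_B V diag(δ - ζ) V̂ᴴ M_B`. Every matrix in the theorem is then of the form
`V diag(c) V̂ᴴ`, and these multiply through `M_B` like their diagonals. The `k`-th term of the
series becomes `V diag((λ - ζ_c)^k (δ_j - ζ_c)^{-(k+1)}) V̂ᴴ` with the first `φ` diagonal
entries deflated to zero, and the remaining entries are geometric series with ratio
`(λ - ζ_c)/(δ_j - ζ_c)` of modulus `< 1`, summing to `(δ_j - λ)⁻¹`.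
-/

open Matrix BigOperators

theorem Fin.sum_castLE_eq_sum_ite {M : Type*} [AddCommMonoid M] {m n : ℕ} (h : m ≤ n)
    (F : Fin n → M) :
    ∑ x : Fin m, F (Fin.castLE h x) = ∑ y : Fin n, if (y : ℕ) < m then F y else 0 := by
  rw [← Finset.sum_filter]
  refine (Finset.sum_map _ (Fin.castLEEmb h) F).symm.trans (congrArg (Finset.sum · F) ?_)
  ext y
  simp only [Finset.mem_map, Finset.mem_univ, true_and, Finset.mem_filter, Fin.castLEEmb_apply]
  exact ⟨fun ⟨x, hx⟩ => hx ▸ x.2, fun hy => ⟨⟨y, hy⟩, rfl⟩⟩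

theorem hasSum_pow_mul_inv_pow_succ {K : Type*} [NormedField K] {t a : K} (h : ‖t‖ < ‖a‖) :
    HasSum (fun k : ℕ => t ^ k * a⁻¹ ^ (k + 1)) (a - t)⁻¹ := by
  have ha : a ≠ 0 := norm_pos_iff.mp ((norm_nonneg t).trans_lt h)
  have hr : ‖t / a‖ < 1 := by rwa [norm_div, div_lt_one ((norm_nonneg t).trans_lt h)]
  have hterm : (fun k : ℕ => t ^ k * a⁻¹ ^ (k + 1)) = fun k => a⁻¹ * (t / a) ^ k := by
    ext k
    ring
  have hsum : (a - t)⁻¹ = a⁻¹ * (1 - t / a)⁻¹ := by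
    rw [← mul_inv, mul_sub, mul_one, mul_div_cancel₀ t ha]
  rw [hterm, hsum]
  exact (hasSum_geometric_of_norm_lt_one hr).mul_left a⁻¹

namespace Matrix

theorem submatrix_castLE_mul_submatrix_castLE {m l R : Type*} [NonAssocSemiring R] {φ d : ℕ}
    (h : φ ≤ d) (A : Matrix m (Fin d) R) (B : Matrix (Fin d) l R) :
    A.submatrix id (Fin.castLE h) * B.submatrix (Fin.castLE h) id
      = A * diagonal (fun j : Fin d => if (j : ℕ) < φ then (1 : R) else 0) * B := by
  ext i k
  rw [mul_apply, mul_apply]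
  refine (Fin.sum_castLE_eq_sum_ite h fun j => A i j * B j k).trans
    (Finset.sum_congr rfl fun j _ => ?_)
  by_cases hj : (j : ℕ) < φ <;> simp [hj]

variable {n R : Type*} [Fintype n] [DecidableEq n]

section CommRing

variable [CommRing R] {A M V U : Matrix n n R} {δ : n → R}

theorem mul_eq_mul_mul_diagonal_of_mulVec
    (h : ∀ j, A *ᵥ (fun a => V a j) = δ j • (M *ᵥ (fun a => V a j))) :
    A * V = M * V * diagonal δ := by
  ext i j
  rw [mul_diagonal]
  simpa [mul_apply, mulVec, dotProduct, mul_comm] using congrFun (h j) i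

theorem mul_diagonal_mul_mul_mul_diagonal_mul (hUMV : U * M * V = 1) (c c' : n → R) :
    V * diagonal c * U * M * (V * diagonal c' * U)
      = V * diagonal (fun j => c j * c' j) * U := by
  rw [← diagonal_mul_diagonal]
  simp only [Matrix.mul_assoc]
  rw [← Matrix.mul_assoc U, ← Matrix.mul_assoc (U * M), hUMV, Matrix.one_mul]

theorem sub_smul_eq_mul_diagonal_mul (hUMV : U * M * V = 1) (hAV : A * V = M * V * diagonal δ)
    (ζ : R) : A - ζ • M = M * V * diagonal (fun j => δ j - ζ) * (U * M) := by
  have hVUM : V * (U * M) = 1 := mul_eq_one_comm.mp hUMV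
  have hdiag : diagonal (fun j => δ j - ζ) = diagonal δ - ζ • 1 := by
    ext i j
    by_cases h : i = j <;> simp [h]
  rw [hdiag, Matrix.mul_sub, Matrix.sub_mul, ← hAV, Matrix.mul_assoc A, hVUM, Matrix.mul_one,
    Matrix.mul_smul, Matrix.mul_one, Matrix.smul_mul, Matrix.mul_assoc M, hVUM, Matrix.mul_one]

theorem one_sub_mul_diagonal_mul_mul (hUMV : U * M * V = 1) (c : n → R) :
    1 - V * diagonal c * U * M = V * diagonal (fun j => 1 - c j) * U * M := by
  have hVUM : V * diagonal (fun _ => 1) * U * M = 1 := by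
    rw [diagonal_one, Matrix.mul_one, Matrix.mul_assoc, mul_eq_one_comm.mp hUMV]
  rw [← diagonal_sub (fun _ => 1) c, Matrix.mul_sub, Matrix.sub_mul, Matrix.sub_mul, hVUM]

theorem mul_smul_mul_pow_eq_mul_diagonal_mul {Bt : Matrix n n R} {f : n → R}
    (hUMV : U * M * V = 1) (hBt : Bt = V * diagonal f * U) (t : R) (k : ℕ) :
    Bt * (t • (M * Bt)) ^ k = V * diagonal (fun j => t ^ k * f j ^ (k + 1)) * U := by
  induction k with
  | zero => simp [hBt]
  | succ k ih =>
    rw [pow_succ, ← Matrix.mul_assoc, ih, Matrix.mul_smul, ← Matrix.mul_assoc, hBt,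
      mul_diagonal_mul_mul_mul_diagonal_mul hUMV, ← smul_mul, ← Matrix.mul_smul,
      ← diagonal_smul]
    congr 3
    ext j
    simp only [Pi.smul_apply, smul_eq_mul]
    ring

end CommRing

section Field

variable [Field R] {A M V U : Matrix n n R} {δ : n → R}

theorem inv_sub_smul_eq_mul_diagonal_mul (hUMV : U * M * V = 1)
    (hAV : A * V = M * V * diagonal δ) {ζ : R} (hζ : ∀ j, ζ ≠ δ j) :
    (A - ζ • M)⁻¹ = V * diagonal (fun j => (δ j - ζ)⁻¹) * U := by
  apply inv_eq_left_inv
  have hinv : (fun j => (δ j - ζ)⁻¹ * (δ j - ζ)) = fun _ => 1 :=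
    funext fun j => inv_mul_cancel₀ (sub_ne_zero.mpr (hζ j).symm)
  have h :=
    mul_diagonal_mul_mul_mul_diagonal_mul hUMV (fun j => (δ j - ζ)⁻¹) (fun j => δ j - ζ)
  rw [hinv, diagonal_one, Matrix.mul_one] at h
  rw [sub_smul_eq_mul_diagonal_mul hUMV hAV]
  calc V * diagonal _ * U * (M * V * diagonal _ * (U * M))
      = V * diagonal (fun j => (δ j - ζ)⁻¹) * U * M * (V * diagonal (fun j => δ j - ζ) * U)
          * M := by simp only [Matrix.mul_assoc]
    _ = V * (U * M) := by rw [h, Matrix.mul_assoc]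
    _ = 1 := mul_eq_one_comm.mp hUMV

end Field

end Matrix

theorem stmt_13_general {d : ℕ}
    (B MB V Vh : Matrix (Fin d) (Fin d) ℂ) (δ : Fin d → ℂ)
    (hbi : Vhᴴ * MB * V = 1)
    (hright : ∀ j, B *ᵥ (fun a => V a j) = δ j • (MB *ᵥ (fun a => V a j)))
    (φ : ℕ) (hφd : φ ≤ d)
    (Vφ Vhφ : Matrix (Fin d) (Fin φ) ℂ)
    (hVφ : Vφ = V.submatrix id (Fin.castLE hφd))
    (hVhφ : Vhφ = Vh.submatrix id (Fin.castLE hφd))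
    (ζc lam : ℂ)
    (hζc : ∀ j, ζc ≠ δ j)
    (hlam : ∀ j, lam ≠ δ j)
    (hin : ∀ j : Fin d, φ ≤ (j : ℕ) → ‖lam - ζc‖ < ‖δ j - ζc‖)
    (Bt : Matrix (Fin d) (Fin d) ℂ)
    (hBt : Bt = (1 - Vφ * Vhφᴴ * MB) * (B - ζc • MB)⁻¹) :
    HasSum (fun k : ℕ => Bt * ((lam - ζc) • (MB * Bt)) ^ k)
      ((1 - Vφ * Vhφᴴ * MB) * (B - lam • MB)⁻¹) := by
  have hBV := mul_eq_mul_mul_diagonal_of_mulVec hright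
  have hproj : 1 - Vφ * Vhφᴴ * MB
      = V * diagonal (fun j : Fin d => 1 - if (j : ℕ) < φ then 1 else 0) * Vhᴴ * MB := by
    rw [hVφ, hVhφ, conjTranspose_submatrix, submatrix_castLE_mul_submatrix_castLE,
      one_sub_mul_diagonal_mul_mul hbi]
  have hdeflated : ∀ ζ, (∀ j, ζ ≠ δ j) → (1 - Vφ * Vhφᴴ * MB) * (B - ζ • MB)⁻¹
      = V * diagonal (fun j : Fin d => (1 - if (j : ℕ) < φ then 1 else 0) * (δ j - ζ)⁻¹)
        * Vhᴴ :=
    fun ζ hζ => by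
      rw [hproj, inv_sub_smul_eq_mul_diagonal_mul hbi hBV hζ,
        mul_diagonal_mul_mul_mul_diagonal_mul hbi]
  rw [hdeflated lam hlam]
  simp_rw [mul_smul_mul_pow_eq_mul_diagonal_mul hbi (hBt.trans (hdeflated ζc hζc))]
  refine ((HasSum.matrix_diagonal (Pi.hasSum.2 fun j => ?_)).mul_left V).mul_right Vhᴴ
  by_cases hj : (j : ℕ) < φ
  · simp [hj]
  · simpa [hj, sub_sub_sub_cancel_right] using hasSum_pow_mul_inv_pow_succ (hin j (not_lt.1 hj))

/-- (Theorem 3.2.) If `ζ_c` is not an eigenvalue of the diagonalizable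
pencil `(B, M_B)` and `λ` satisfies `|λ - ζ_c| < |δ_j - ζ_c|` for all `j > φ`, then the
Neumann-type series `∑ₖ B̃(ζ_c) [(λ - ζ_c) M_B B̃(ζ_c)]^k` converges with sum
`(I - V_φ V̂_φᴴ M_B) B(λ)⁻¹`. -/
theorem stmt_13 {d : ℕ}
    (B MB V Vh : Matrix (Fin d) (Fin d) ℂ) (δ : Fin d → ℂ)
    (hMB : IsUnit MB)
    (hbi : Vhᴴ * MB * V = 1)
    (hright : ∀ j, B *ᵥ (fun a => V a j) = δ j • (MB *ᵥ (fun a => V a j)))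
    (hleft : ∀ j, (fun a => star (Vh a j)) ᵥ* B = δ j • ((fun a => star (Vh a j)) ᵥ* MB))
    (φ : ℕ) (hφ1 : 1 ≤ φ) (hφd : φ ≤ d)
    (Vφ Vhφ : Matrix (Fin d) (Fin φ) ℂ)
    (hVφ : Vφ = V.submatrix id (Fin.castLE hφd))
    (hVhφ : Vhφ = Vh.submatrix id (Fin.castLE hφd))
    (ζc lam : ℂ)
    (hζc : ∀ j, ζc ≠ δ j)
    (hlam : ∀ j, lam ≠ δ j)
    (hin : ∀ j : Fin d, φ ≤ (j : ℕ) → ‖lam - ζc‖ < ‖δ j - ζc‖)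
    (Bt : Matrix (Fin d) (Fin d) ℂ)
    (hBt : Bt = (1 - Vφ * Vhφᴴ * MB) * (B - ζc • MB)⁻¹) :
    HasSum (fun k : ℕ => Bt * ((lam - ζc) • (MB * Bt)) ^ k)
      ((1 - Vφ * Vhφᴴ * MB) * (B - lam • MB)⁻¹) :=
  stmt_13_general B MB V Vh δ hbi hright φ hφd Vφ Vhφ hVφ hVhφ ζc lam hζc hlam hin Bt hBt
end

section
/- (Proposition 3.3.) Let ζ_c ∈ ℂ with ζ_c ≠ δ_j for all j = 1,…,d, and let λ ∈ ℂ be such that λ ≠ δ_j for all j and |λ − ζ_c| < |δ_j − ζ_c| for all j = φ+1,…,d. For a nonnegative integer ψ define the truncation error R_ψ(λ) = (I − V_φ V̂_φ^H M_B) B(λ)^{-1} − Σ_{k=0}^{ψ} B̃(ζ_c) [(λ − ζ_c) M_B B̃(ζ_c)]^k. Then R_ψ(λ) = Σ_{j=φ+1}^{d} ( Σ_{k=ψ+1}^{∞} (λ − ζ_c)^k / (δ_j − ζ_c)^{k+1} ) v^{(j)} (v̂^{(j)})^H, where each inner series converges absolutely. -/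
/-!
Biorthogonality says that `V̂ᴴ M_B` is the inverse of `V`, so together with `B V = M_B V diag δ`
the pencil is diagonalised simultaneously: `B - μ M_B = M_B V diag(δ - μ) V̂ᴴ M_B`. Every matrix
occurring in the statement is therefore of the form `V diag f V̂ᴴ = ∑ⱼ f j • v⁽ʲ⁾ (v̂⁽ʲ⁾)ᴴ`, and such
matrices multiply through `M_B` pointwise in `f`. The identity thus splits into one scalar identity
per eigenvalue: for `j < φ` the projector `1 - V_φ V̂_φᴴ M_B` kills the term, and for `j ≥ φ` it
is the tail of the geometric series `(δ - λ)⁻¹ = ∑ₖ (λ - ζ)ᵏ / (δ - ζ)ᵏ⁺¹`.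
-/

open Matrix

section GeometricTail

variable {𝕜 : Type*} [NormedField 𝕜] {x a : 𝕜}

lemma summable_norm_pow_div_pow_succ (hxa : ‖x‖ < ‖a‖) :
    Summable fun k : ℕ => ‖x ^ k / a ^ (k + 1)‖ := by
  have ha : a ≠ 0 := norm_pos_iff.mp ((norm_nonneg x).trans_lt hxa)
  have hr : ‖x / a‖ < 1 := by rwa [norm_div, div_lt_one (norm_pos_iff.mpr ha)]
  refine ((summable_geometric_of_lt_one (norm_nonneg _) hr).mul_left ‖a⁻¹‖).congr fun k => ?_
  rw [← norm_pow, ← norm_mul, div_pow, pow_succ, mul_comm (a ^ k)]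
  field_simp

lemma hasSum_pow_div_pow_succ [CompleteSpace 𝕜] (hxa : ‖x‖ < ‖a‖) :
    HasSum (fun k : ℕ => x ^ k / a ^ (k + 1)) (a - x)⁻¹ := by
  have ha : a ≠ 0 := norm_pos_iff.mp ((norm_nonneg x).trans_lt hxa)
  have hr : ‖x / a‖ < 1 := by rwa [norm_div, div_lt_one (norm_pos_iff.mpr ha)]
  have hax : a - x ≠ 0 := fun h => hxa.ne (by rw [sub_eq_zero.mp h])
  have hterm : (fun k : ℕ => x ^ k / a ^ (k + 1)) = fun k => a⁻¹ * (x / a) ^ k := by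
    ext k
    rw [div_pow, pow_succ]
    field_simp
  rw [hterm, show (a - x)⁻¹ = a⁻¹ * (1 - x / a)⁻¹ by field_simp]
  exact (hasSum_geometric_of_norm_lt_one hr).mul_left a⁻¹

lemma summable_norm_pow_div_pow_succ_tail (hxa : ‖x‖ < ‖a‖) (ψ : ℕ) :
    Summable fun k : ℕ => ‖x ^ (k + ψ + 1) / a ^ (k + ψ + 2)‖ :=
  (summable_nat_add_iff (f := fun k => ‖x ^ k / a ^ (k + 1)‖) (ψ + 1)).mpr
    (summable_norm_pow_div_pow_succ hxa)

lemma hasSum_pow_div_pow_succ_tail [CompleteSpace 𝕜] (hxa : ‖x‖ < ‖a‖) (ψ : ℕ) :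
    HasSum (fun k : ℕ => x ^ (k + ψ + 1) / a ^ (k + ψ + 2))
      ((a - x)⁻¹ - ∑ k ∈ Finset.range (ψ + 1), x ^ k / a ^ (k + 1)) :=
  (hasSum_nat_add_iff' (f := fun k => x ^ k / a ^ (k + 1)) (ψ + 1)).mpr
    (hasSum_pow_div_pow_succ hxa)

end GeometricTail

namespace Matrix

variable {n R : Type*} [Fintype n] [DecidableEq n]

section CommRing

variable [CommRing R]

lemma mul_eq_mul_mul_diagonal_of_mulVec_eq {B M V : Matrix n n R} {δ : n → R}
    (hBV : ∀ j, B *ᵥ (fun a => V a j) = δ j • (M *ᵥ (fun a => V a j))) :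
    B * V = M * V * diagonal δ := by
  ext a j
  rw [mul_diagonal]
  simpa [mul_apply, mulVec, dotProduct, mul_comm] using congrFun (hBV j) a

variable (V U : Matrix n n R)

/-- With `U = V̂ᴴ` this is `∑ⱼ f j • v⁽ʲ⁾ (v̂⁽ʲ⁾)ᴴ`. -/
def spectralSum : (n → R) →ₗ[R] Matrix n n R :=
  LinearMap.mulRight R U ∘ₗ LinearMap.mulLeft R V ∘ₗ diagonalLinearMap n R R

lemma spectralSum_apply (f : n → R) : spectralSum V U f = V * diagonal f * U := rfl

lemma spectralSum_eq_sum_vecMulVec (f : n → R) :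
    spectralSum V U f = ∑ j, f j • vecMulVec (fun a => V a j) (U j) := by
  ext a b
  rw [spectralSum_apply, mul_apply, sum_apply]
  refine Finset.sum_congr rfl fun j _ => ?_
  rw [mul_diagonal, smul_apply, vecMulVec_apply, smul_eq_mul]
  ring

lemma sum_filter_smul_vecMulVec_eq_spectralSum (p : n → Prop) [DecidablePred p] (c : n → R) :
    ∑ j ∈ Finset.univ.filter p, c j • vecMulVec (fun a => V a j) (U j) =
      spectralSum V U fun j => if p j then c j else 0 := by
  rw [spectralSum_eq_sum_vecMulVec, Finset.sum_filter]
  exact Finset.sum_congr rfl fun j _ => by split_ifs <;> simp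

lemma submatrix_mul_submatrix_eq_spectralSum {m : Type*} [Fintype m] (e : m → n)
    (he : Function.Injective e) :
    V.submatrix id e * U.submatrix e id = spectralSum V U ((Set.range e).indicator 1) := by
  ext a b
  rw [spectralSum_apply, mul_apply, mul_apply]
  exact Fintype.sum_of_injective e he _ _ (fun j hj => by simp [hj]) fun i => by simp

variable {V U} {M : Matrix n n R}

lemma spectralSum_mul_mul_spectralSum (hUMV : U * M * V = 1) (f g : n → R) :
    spectralSum V U f * M * spectralSum V U g = spectralSum V U (f * g) := by
  calc spectralSum V U f * M * spectralSum V U g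
      = V * (diagonal f * (U * M * V) * diagonal g) * U := by
        simp only [spectralSum_apply, Matrix.mul_assoc]
    _ = spectralSum V U (f * g) := by
        rw [hUMV, Matrix.mul_one, diagonal_mul_diagonal]; rfl

lemma spectralSum_one_mul (hUMV : U * M * V = 1) : spectralSum V U 1 * M = 1 := by
  rw [spectralSum_apply, Pi.one_def, diagonal_one, Matrix.mul_one, Matrix.mul_assoc]
  exact mul_eq_one_comm.mp hUMV

lemma mul_spectralSum_one (hUMV : U * M * V = 1) : M * spectralSum V U 1 = 1 :=
  mul_eq_one_comm.mp (spectralSum_one_mul hUMV)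

lemma one_sub_spectralSum_mul (hUMV : U * M * V = 1) (f : n → R) :
    1 - spectralSum V U f * M = spectralSum V U (1 - f) * M := by
  rw [map_sub, Matrix.sub_mul, spectralSum_one_mul hUMV]

lemma spectralSum_mul_smul_mul_pow (hUMV : U * M * V = 1) (c : R) (g : n → R) (k : ℕ) :
    spectralSum V U g * (c • (M * spectralSum V U g)) ^ k =
      spectralSum V U (c ^ k • g ^ (k + 1)) := by
  induction k with
  | zero => simp
  | succ k ih =>
    rw [pow_succ, ← Matrix.mul_assoc, ih, Matrix.mul_smul, ← Matrix.mul_assoc,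
      spectralSum_mul_mul_spectralSum hUMV, ← map_smul, smul_mul_assoc, smul_smul, ← pow_succ',
      ← pow_succ]

end CommRing

variable {K : Type*} [Field K] {V U M B : Matrix n n K} {δ : n → K}

lemma inv_sub_smul_eq_spectralSum (hUMV : U * M * V = 1) (hBV : B * V = M * V * diagonal δ)
    {μ : K} (hμ : ∀ j, δ j ≠ μ) :
    (B - μ • M)⁻¹ = spectralSum V U fun j => (δ j - μ)⁻¹ := by
  have hres : (B - μ • M) * V = M * V * diagonal fun j => δ j - μ := by
    rw [Matrix.sub_mul, hBV, smul_mul, ← diagonal_sub (d₂ := fun _ => μ),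
      ← smul_one_eq_diagonal, Matrix.mul_sub, Matrix.mul_smul, Matrix.mul_one]
  apply inv_eq_right_inv
  calc (B - μ • M) * spectralSum V U (fun j => (δ j - μ)⁻¹)
      = M * spectralSum V U (fun j => (δ j - μ) * (δ j - μ)⁻¹) := by
        rw [spectralSum_apply, spectralSum_apply, ← Matrix.mul_assoc, ← Matrix.mul_assoc, hres,
          Matrix.mul_assoc (M * V), diagonal_mul_diagonal]
        simp only [Matrix.mul_assoc]
    _ = 1 := by
        rw [show (fun j => (δ j - μ) * (δ j - μ)⁻¹) = 1 from
          funext fun j => mul_inv_cancel₀ (sub_ne_zero.mpr (hμ j))]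
        exact mul_spectralSum_one hUMV

end Matrix

theorem stmt_16_general {d : ℕ}
    (B MB V Vh : Matrix (Fin d) (Fin d) ℂ) (δ : Fin d → ℂ)
    (hbi : Vhᴴ * MB * V = 1)
    (hright : ∀ j, B *ᵥ (fun a => V a j) = δ j • (MB *ᵥ (fun a => V a j)))
    (φ : ℕ) (hφd : φ ≤ d)
    (Vφ Vhφ : Matrix (Fin d) (Fin φ) ℂ)
    (hVφ : Vφ = V.submatrix id (Fin.castLE hφd))
    (hVhφ : Vhφ = Vh.submatrix id (Fin.castLE hφd))
    (ζc lam : ℂ)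
    (hζc : ∀ j, ζc ≠ δ j)
    (hlam : ∀ j, lam ≠ δ j)
    (hin : ∀ j : Fin d, φ ≤ (j : ℕ) → ‖lam - ζc‖ < ‖δ j - ζc‖)
    (ψ : ℕ)
    (Bt Rψ : Matrix (Fin d) (Fin d) ℂ)
    (hBt : Bt = (1 - Vφ * Vhφᴴ * MB) * (B - ζc • MB)⁻¹)
    (hR : Rψ = (1 - Vφ * Vhφᴴ * MB) * (B - lam • MB)⁻¹ -
      ∑ k ∈ Finset.range (ψ + 1), Bt * ((lam - ζc) • (MB * Bt)) ^ k) :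
    (∀ j : Fin d, φ ≤ (j : ℕ) →
        Summable (fun k : ℕ => ‖(lam - ζc) ^ (k + ψ + 1) / (δ j - ζc) ^ (k + ψ + 2)‖)) ∧
      Rψ = ∑ j ∈ Finset.univ.filter (fun j : Fin d => φ ≤ (j : ℕ)),
        (∑' k : ℕ, (lam - ζc) ^ (k + ψ + 1) / (δ j - ζc) ^ (k + ψ + 2)) •
          Matrix.vecMulVec (fun a => V a j) (fun b => star (Vh b j)) := by
  have hBV := mul_eq_mul_mul_diagonal_of_mulVec_eq hright
  set e : Fin d → ℂ := fun j => if φ ≤ (j : ℕ) then 1 else 0 with he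
  have hP : 1 - Vφ * Vhφᴴ * MB = spectralSum V Vhᴴ e * MB := by
    rw [hVφ, hVhφ, conjTranspose_submatrix,
      submatrix_mul_submatrix_eq_spectralSum _ _ _ (Fin.castLE_injective hφd),
      one_sub_spectralSum_mul hbi, Fin.range_castLE]
    congr 2
    ext j
    simp only [he, Pi.sub_apply, Pi.one_apply, Set.indicator_apply, Set.mem_ofPred_eq]
    split_ifs <;> first | omega | norm_num
  have hBt' : Bt = spectralSum V Vhᴴ (e * fun j => (δ j - ζc)⁻¹) := by
    rw [hBt, hP, inv_sub_smul_eq_spectralSum hbi hBV fun j => (hζc j).symm,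
      spectralSum_mul_mul_spectralSum hbi]
  have hR' : Rψ = spectralSum V Vhᴴ ((e * fun j => (δ j - lam)⁻¹) -
      ∑ k ∈ Finset.range (ψ + 1), (lam - ζc) ^ k • (e * fun j => (δ j - ζc)⁻¹) ^ (k + 1)) := by
    simp only [hR, hP, hBt', inv_sub_smul_eq_spectralSum hbi hBV fun j => (hlam j).symm,
      spectralSum_mul_mul_spectralSum hbi, spectralSum_mul_smul_mul_pow hbi, map_sub, map_sum]
  refine ⟨fun j hj => summable_norm_pow_div_pow_succ_tail (hin j hj) ψ, ?_⟩
  rw [hR']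
  refine Eq.trans ?_ (sum_filter_smul_vecMulVec_eq_spectralSum V Vhᴴ _ _).symm
  congr 1
  ext j
  simp only [he, Pi.sub_apply, Finset.sum_apply, Pi.smul_apply, Pi.mul_apply, Pi.pow_apply,
    smul_eq_mul]
  split_ifs with hj
  · rw [(hasSum_pow_div_pow_succ_tail (hin j hj) ψ).tsum_eq, sub_sub_sub_cancel_right]
    simp [div_eq_mul_inv, inv_pow]
  · simp

/-- (Proposition 3.3.) The truncation error
`R_ψ(λ) = (I - V_φ V̂_φᴴ M_B) B(λ)⁻¹ - ∑_{k=0}^{ψ} B̃(ζ_c) [(λ - ζ_c) M_B B̃(ζ_c)]^k`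
equals `∑_{j > φ} (∑_{k=ψ+1}^{∞} (λ - ζ_c)^k / (δ_j - ζ_c)^(k+1)) v⁽ʲ⁾ (v̂⁽ʲ⁾)ᴴ`,
where each inner series converges absolutely. -/
theorem stmt_16 {d : ℕ}
    (B MB V Vh : Matrix (Fin d) (Fin d) ℂ) (δ : Fin d → ℂ)
    (hMB : IsUnit MB)
    (hbi : Vhᴴ * MB * V = 1)
    (hright : ∀ j, B *ᵥ (fun a => V a j) = δ j • (MB *ᵥ (fun a => V a j)))
    (hleft : ∀ j, (fun a => star (Vh a j)) ᵥ* B = δ j • ((fun a => star (Vh a j)) ᵥ* MB))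
    (φ : ℕ) (hφ1 : 1 ≤ φ) (hφd : φ ≤ d)
    (Vφ Vhφ : Matrix (Fin d) (Fin φ) ℂ)
    (hVφ : Vφ = V.submatrix id (Fin.castLE hφd))
    (hVhφ : Vhφ = Vh.submatrix id (Fin.castLE hφd))
    (ζc lam : ℂ)
    (hζc : ∀ j, ζc ≠ δ j)
    (hlam : ∀ j, lam ≠ δ j)
    (hin : ∀ j : Fin d, φ ≤ (j : ℕ) → ‖lam - ζc‖ < ‖δ j - ζc‖)
    (ψ : ℕ)
    (Bt Rψ : Matrix (Fin d) (Fin d) ℂ)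
    (hBt : Bt = (1 - Vφ * Vhφᴴ * MB) * (B - ζc • MB)⁻¹)
    (hR : Rψ = (1 - Vφ * Vhφᴴ * MB) * (B - lam • MB)⁻¹ -
      ∑ k ∈ Finset.range (ψ + 1), Bt * ((lam - ζc) • (MB * Bt)) ^ k) :
    (∀ j : Fin d, φ ≤ (j : ℕ) →
        Summable (fun k : ℕ => ‖(lam - ζc) ^ (k + ψ + 1) / (δ j - ζc) ^ (k + ψ + 2)‖)) ∧
      Rψ = ∑ j ∈ Finset.univ.filter (fun j : Fin d => φ ≤ (j : ℕ)),
        (∑' k : ℕ, (lam - ζc) ^ (k + ψ + 1) / (δ j - ζc) ^ (k + ψ + 2)) •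
          Matrix.vecMulVec (fun a => V a j) (fun b => star (Vh b j)) :=
  stmt_16_general B MB V Vh δ hbi hright φ hφd Vφ Vhφ hVφ hVhφ ζc lam hζc hlam hin ψ Bt Rψ hBt hR
end
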